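/- Let R be a ring. Every simple right R-module is finitely presented if and only if every absolutely pure right R-module X satisfies Ext¹_R(S, X) = 0 for every simple right R-module S. -/

import Mathlib

open CategoryTheory

/-- `Ext¹_R(M, N)` as an object of `ModuleCat ℤ`. -/
noncomputable abbrev ext1 {R : Type} [Ring R] (M N : ModuleCat.{0} R) : ModuleCat ℤ :=
  ((Ext ℤ (ModuleCat.{0} R) 1).obj (Opposite.op M)).obj N

/-- A module `X` is absolutely pure if `Ext¹(F, X) = 0` for every finitely presented `F`. -/
def AbsolutelyPure {R : Type} [Ring R] (X : ModuleCat.{0} R) : Prop :=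
  ∀ F : ModuleCat.{0} R, Module.FinitePresentation R F → Subsingleton (ext1 F X)

/-!
`Ext¹(M, X) = 0` means: for one (equivalently, any) projective presentation `Q ↠ M` with kernel
`K`, every map `K → X` extends to `Q`. Let `M` be finitely generated, `Rⁿ ↠ M` with kernel `K`.
For each finite `s ⊆ K` embed `K ⧸ ⟨s⟩` into an injective module `E s`, and let `X ⊆ ∏ₛ E s` be
the families vanishing for all large `s`. A map from a finitely generated module into `X`
vanishes in all coordinates beyond a single `s`, so it extends coordinatewise by injectivity:
`X` is absolutely pure. If `Ext¹(M, X) = 0`, the map `K → X`, `a ↦ (a mod ⟨s⟩)ₛ`, extends to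
`Rⁿ`; its image vanishes beyond some `s₀`, hence `K = ⟨s₀⟩` and `M` is finitely presented.
-/

section Restriction

open LinearMap

variable {R : Type*} [Ring R] {X : Type*} [AddCommGroup X] [Module R X]

theorem Function.Exact.exists_comp_eq_of_comp_eq_zero {M₁ M₂ M₃ : Type*} [AddCommGroup M₁]
    [Module R M₁] [AddCommGroup M₂] [Module R M₂] [AddCommGroup M₃] [Module R M₃]
    {f : M₁ →ₗ[R] M₂} {g : M₂ →ₗ[R] M₃} (hfg : Function.Exact f g) (hg : Function.Surjective g)
    {h : M₂ →ₗ[R] X} (hh : h ∘ₗ f = 0) : ∃ φ : M₃ →ₗ[R] X, φ ∘ₗ g = h :=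
  ⟨(range f).liftQ h (range_le_ker_iff.mpr hh) ∘ₗ (hfg.linearEquivOfSurjective hg).symm.toLinearMap,
    by ext; simp⟩

theorem Function.Exact.forall_exists_comp_eq_iff_surjective_restrict
    {C₂ C₁ C₀ M : Type*} [AddCommGroup C₂] [Module R C₂] [AddCommGroup C₁] [Module R C₁]
    [AddCommGroup C₀] [Module R C₀] [AddCommGroup M] [Module R M]
    {d₂ : C₂ →ₗ[R] C₁} {d₁ : C₁ →ₗ[R] C₀} {ε : C₀ →ₗ[R] M}
    (h₂ : Function.Exact d₂ d₁) (h₁ : Function.Exact d₁ ε) :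
    (∀ f : C₁ →ₗ[R] X, f ∘ₗ d₂ = 0 → ∃ g : C₀ →ₗ[R] X, g ∘ₗ d₁ = f) ↔
      Function.Surjective fun g : C₀ →ₗ[R] X => g ∘ₗ (ker ε).subtype := by
  set d : C₁ →ₗ[R] ker ε := d₁.codRestrict _ h₁.apply_apply_eq_zero
  have hd : Function.Surjective d := fun ⟨y, hy⟩ =>
    let ⟨z, hz⟩ := (h₁ y).mp hy
    ⟨z, Subtype.ext hz⟩
  have hexact : Function.Exact d₂ d :=
    LinearMap.exact_iff.mpr ((ker_codRestrict _ _ _).trans h₂.linearMap_ker_eq)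
  constructor
  · intro H φ
    obtain ⟨g, hg⟩ := H (φ ∘ₗ d) <| by
      rw [LinearMap.comp_assoc, hexact.linearMap_comp_eq_zero, comp_zero]
    exact ⟨g, (cancel_right hd).mp hg⟩
  · intro H f hf
    obtain ⟨φ, rfl⟩ := hexact.exists_comp_eq_of_comp_eq_zero hd hf
    obtain ⟨g, rfl⟩ := H φ
    exact ⟨g, rfl⟩

theorem surjective_restrict_ker_of_comp_eq {P Q M : Type*} [AddCommGroup P] [Module R P]
    [AddCommGroup Q] [Module R Q] [AddCommGroup M] [Module R M] {p : P →ₗ[R] M} {q : Q →ₗ[R] M}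
    {α : P →ₗ[R] Q} (hα : q ∘ₗ α = p) {β : Q →ₗ[R] P} (hβ : p ∘ₗ β = q)
    (h : Function.Surjective fun g : Q →ₗ[R] X => g ∘ₗ (ker q).subtype) :
    Function.Surjective fun g : P →ₗ[R] X => g ∘ₗ (ker p).subtype := by
  intro φ
  have hβ' : ∀ y ∈ ker q, β y ∈ ker p := fun y hy => by
    rwa [LinearMap.mem_ker, ← LinearMap.comp_apply, hβ]
  have hτ : ∀ x, x - β (α x) ∈ ker p := fun x => by
    rw [LinearMap.mem_ker, map_sub, ← LinearMap.comp_apply p β, hβ, ← LinearMap.comp_apply q α,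
      hα, sub_self]
  obtain ⟨G, hG⟩ := h (φ ∘ₗ β.restrict hβ')
  refine ⟨φ ∘ₗ (LinearMap.id - β ∘ₗ α).codRestrict _ hτ + G ∘ₗ α, ?_⟩
  ext ⟨y, hy⟩
  have hαy : α y ∈ ker q := by rwa [LinearMap.mem_ker, ← LinearMap.comp_apply, hα]
  have hGα : G (α y) = φ ⟨β (α y), _⟩ := congr($hG ⟨α y, hαy⟩)
  simp only [LinearMap.comp_apply, LinearMap.add_apply, Submodule.subtype_apply, hGα, ← map_add]
  congr 1
  ext
  simp

end Restriction

section Ext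

variable {R : Type} [Ring R]

theorem subsingleton_ext1_iff_of_projectiveResolution {M : ModuleCat.{0} R} (X : ModuleCat.{0} R)
    (P : ProjectiveResolution M) :
    Subsingleton (ext1 M X) ↔ ∀ f : P.complex.X 1 →ₗ[R] X, f ∘ₗ (P.complex.d 2 1).hom = 0 →
      ∃ g : P.complex.X 0 →ₗ[R] X, g ∘ₗ (P.complex.d 1 0).hom = f := by
  rw [← ModuleCat.isZero_iff_subsingleton, (P.isoExt 1 X).isZero_iff,
    ← HomologicalComplex.exactAt_iff_isZero_homology,
    HomologicalComplex.exactAt_iff' _ 0 1 2 (by simp) (by simp), ShortComplex.moduleCat_exact_iff]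
  refine ModuleCat.homEquiv.forall_congr fun f =>
    imp_congr ?_ <| ModuleCat.homEquiv.exists_congr fun g => ?_
  · exact (ModuleCat.hom_ext_iff (f := P.complex.d 2 1 ≫ f) (g := 0)).trans Iff.rfl
  · exact (ModuleCat.hom_ext_iff (f := P.complex.d 1 0 ≫ g) (g := f)).trans Iff.rfl

theorem subsingleton_ext1_iff_surjective_restrict (M X : ModuleCat.{0} R) {Q : Type}
    [AddCommGroup Q] [Module R Q] [Module.Projective R Q] {p : Q →ₗ[R] M}
    (hp : Function.Surjective p) :
    Subsingleton (ext1 M X) ↔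
      Function.Surjective fun g : Q →ₗ[R] X => g ∘ₗ (LinearMap.ker p).subtype := by
  obtain ⟨P⟩ : Nonempty (ProjectiveResolution M) := HasProjectiveResolution.out
  have hexact₁ : Function.Exact (P.complex.d 2 1) (P.complex.d 1 0) :=
    (ShortComplex.ShortExact.moduleCat_exact_iff_function_exact _).mp (P.exact_succ 0)
  have hexact₀ : Function.Exact (P.complex.d 1 0) (P.π.f 0) :=
    (ShortComplex.ShortExact.moduleCat_exact_iff_function_exact _).mp P.exact₀
  have hπ : Function.Surjective (P.π.f 0) := (ModuleCat.epi_iff_surjective _).mp inferInstance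
  have : Module.Projective R (P.complex.X 0) := (IsProjective.iff_projective _).mpr (P.projective 0)
  rw [subsingleton_ext1_iff_of_projectiveResolution X P,
    hexact₁.forall_exists_comp_eq_iff_surjective_restrict hexact₀]
  obtain ⟨α, hα⟩ := Module.projective_lifting_property p (P.π.f 0).hom hp
  obtain ⟨β, hβ⟩ := Module.projective_lifting_property (P.π.f 0).hom p hπ
  exact ⟨surjective_restrict_ker_of_comp_eq hβ hα, surjective_restrict_ker_of_comp_eq hα hβ⟩

theorem absolutelyPure_of_forall_exists_comp_subtype_eq (X : ModuleCat.{0} R)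
    (hX : ∀ (n : ℕ) (N : Submodule R (Fin n → R)), N.FG →
      ∀ φ : N →ₗ[R] X, ∃ h : (Fin n → R) →ₗ[R] X, h ∘ₗ N.subtype = φ) :
    AbsolutelyPure X := by
  intro F _
  obtain ⟨n, q, hq⟩ := Module.Finite.exists_fin' R F
  rw [subsingleton_ext1_iff_surjective_restrict F X hq]
  exact hX n _ (Module.FinitePresentation.fg_ker q hq)

end Ext

section EventuallyZero

open Filter

universe v

variable (R : Type*) [Ring R] {ι : Type*} (l : Filter ι) (E : ι → Type v)
  [∀ i, AddCommGroup (E i)] [∀ i, Module R (E i)]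

def eventuallyZeroSubmodule : Submodule R (∀ i, E i) where
  carrier := {ξ | ∀ᶠ i in l, ξ i = 0}
  add_mem' hξ hη := hξ.mp (hη.mono fun i hη hξ => by simp [hξ, hη])
  zero_mem' := Eventually.of_forall fun _ => rfl
  smul_mem' r _ hξ := hξ.mono fun i hξ => by simp [hξ]

variable {R l E}

theorem eventually_forall_eventuallyZeroSubmodule_apply_eq_zero {N : Type*} [AddCommGroup N]
    [Module R N] [Module.Finite R N] (φ : N →ₗ[R] eventuallyZeroSubmodule R l E) :
    ∀ᶠ i in l, ∀ y, (φ y : ∀ i, E i) i = 0 := by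
  obtain ⟨T, hT⟩ := Module.Finite.fg_top (R := R) (M := N)
  have hTi : ∀ᶠ i in l, ∀ y ∈ T, (φ y : ∀ i, E i) i = 0 :=
    (eventually_all_finset T).mpr fun y _ => (φ y).2
  refine hTi.mono fun i hi y => ?_
  have hle : Submodule.span R T ≤
      LinearMap.ker (LinearMap.proj i ∘ₗ (eventuallyZeroSubmodule R l E).subtype ∘ₗ φ) :=
    Submodule.span_le.mpr hi
  exact hle (hT ▸ Submodule.mem_top)

theorem exists_comp_subtype_eq_of_eventuallyZeroSubmodule [Small.{v} R]
    [∀ i, Module.Injective R (E i)]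
    {V : Type*} [AddCommGroup V] [Module R V] (N : Submodule R V) [Module.Finite R N]
    (φ : N →ₗ[R] eventuallyZeroSubmodule R l E) :
    ∃ h : V →ₗ[R] eventuallyZeroSubmodule R l E, h ∘ₗ N.subtype = φ := by
  classical
  obtain ⟨s, hs, hφ⟩ := (eventually_forall_eventuallyZeroSubmodule_apply_eq_zero φ).exists_mem
  choose g hg using fun i => Module.Injective.extension_property R (E i) N V N.subtype
    N.injective_subtype (LinearMap.proj i ∘ₗ (eventuallyZeroSubmodule R l E).subtype ∘ₗ φ)
  let h : V →ₗ[R] ∀ i, E i := LinearMap.pi fun i => if i ∈ s then 0 else g i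
  have hh : ∀ v, h v ∈ eventuallyZeroSubmodule R l E := fun v =>
    mem_of_superset hs fun i hi => by simp [h, hi]
  refine ⟨h.codRestrict _ hh, ?_⟩
  ext y i
  by_cases hi : i ∈ s
  · simp [h, hi, hφ i hi y]
  · simpa [h, hi] using congr($(hg i) y)

end EventuallyZero

section FinitelyGenerated

open Filter

variable {R : Type} [Ring R]

theorem absolutelyPure_eventuallyZeroSubmodule {ι : Type} (l : Filter ι) (E : ι → Type)
    [∀ i, AddCommGroup (E i)] [∀ i, Module R (E i)] [∀ i, Module.Injective R (E i)] :
    AbsolutelyPure (ModuleCat.of R (eventuallyZeroSubmodule R l E)) :=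
  absolutelyPure_of_forall_exists_comp_subtype_eq _ fun _ N hN φ =>
    have : Module.Finite R N := Module.Finite.iff_fg.mpr hN
    exists_comp_subtype_eq_of_eventuallyZeroSubmodule N φ

theorem ModuleCat.exists_injective_linearMap_to_injective (N : ModuleCat.{0} R) :
    ∃ E : ModuleCat.{0} R, Module.Injective R E ∧ ∃ j : N →ₗ[R] E, Function.Injective j :=
  ⟨Injective.under N, (Module.injective_iff_injective_object R _).mpr (Injective.injective_under N),
    (Injective.ι N).hom, (ModuleCat.mono_iff_injective _).mp inferInstance⟩

theorem Module.finitePresentation_of_forall_absolutelyPure (M : ModuleCat.{0} R)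
    [Module.Finite R M] (hM : ∀ X : ModuleCat.{0} R, AbsolutelyPure X → Subsingleton (ext1 M X)) :
    Module.FinitePresentation R M := by
  obtain ⟨n, q, hq⟩ := Module.Finite.exists_fin' R M
  set K := LinearMap.ker q
  choose E hE j hj using fun s : Finset K => ModuleCat.exists_injective_linearMap_to_injective
    (ModuleCat.of R (K ⧸ Submodule.span R (s : Set K)))
  have hj₀ (s : Finset K) (a : K) :
      j s (Submodule.Quotient.mk a) = 0 ↔ a ∈ Submodule.span R s := by
    rw [← Submodule.Quotient.mk_eq_zero]
    exact (hj s).eq_iff' (map_zero _)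
  let g : K →ₗ[R] eventuallyZeroSubmodule R atTop (fun s => E s) :=
    (LinearMap.pi fun s => j s ∘ₗ Submodule.mkQ _).codRestrict _ fun a => eventually_atTop.mpr
      ⟨{a}, fun s hs => (hj₀ s a).mpr (Submodule.subset_span (hs (Finset.mem_singleton_self a)))⟩
  obtain ⟨h, hh⟩ := (subsingleton_ext1_iff_surjective_restrict M _ hq).mp
    (hM _ (absolutelyPure_eventuallyZeroSubmodule _ _)) g
  obtain ⟨s, hs⟩ := (eventually_forall_eventuallyZeroSubmodule_apply_eq_zero h).exists
  rw [← Module.FinitePresentation.fg_ker_iff q hq, ← Submodule.fg_top]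
  refine ⟨s, top_unique fun a _ => (hj₀ s a).mp ?_⟩
  calc j s (Submodule.Quotient.mk a) = (g a : ∀ s, E s) s := rfl
    _ = (h a : ∀ s, E s) s := by rw [← hh]; rfl
    _ = 0 := hs a

end FinitelyGenerated

theorem stmt17 (R : Type) [Ring R] :
    (∀ S : ModuleCat.{0} R, IsSimpleModule R S → Module.FinitePresentation R S) ↔
    (∀ X : ModuleCat.{0} R, AbsolutelyPure X →
      ∀ S : ModuleCat.{0} R, IsSimpleModule R S →
        Subsingleton (ext1 S X)) :=
  ⟨fun h X hX S hS => hX S (h S hS), fun h S _ =>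
    Module.finitePresentation_of_forall_absolutelyPure S fun X hX => h X hX S ‹_›⟩
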